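/- arXiv:2505.11789 — 4 statements merged into one kernel-verified Lean document; each statement's English description precedes it below -/
import Mathlib

section
/- Let f ∈ L¹(ℝ) be such that ‖f - T_h f‖₂² = O(|h|^{1+α}) as h → 0, for some α > 0, where (T_h f)(u) = f(u+h) is translation. Then the Fourier transform of f belongs to L¹(ℝ). -/
/-!
Bernstein's argument. Since `𝓕 (f - T_h f) ξ = (1 - 𝐞 (h ξ)) • 𝓕 f ξ` and `‖1 - 𝐞 θ‖ ≥ 1` for
`|θ| ∈ [1/4, 1/2]`, the `L²` mass of `𝓕 f` on the band `1/(4h) ≤ |ξ| ≤ 1/(2h)` is at most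
`e · ‖f - T_h f‖₂² ≤ e C h^(1+α)`. Plancherel is used in the Gaussian-damped form
`∫ e^(-ε|ξ|²) |ĝ ξ|² ≤ ‖g‖₂²`, which only needs `g ∈ L¹`: the left side is `⟪g, k_ε ⋆ g⟫` for a
heat kernel `k_ε ≥ 0` of mass one. By Cauchy–Schwarz the band carries `L¹` mass
`O(h^(α/2))`, which is summable over dyadic `h`, while on `|ξ| ≤ 1` the transform is continuous.
-/

open MeasureTheory Complex FourierTransform Module
open scoped Real ENNReal RealInnerProductSpace ComplexConjugate

/-- The Fourier transform of `f ∈ L¹(ℝ)`, with the normalization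
`f̂(t) = (1/(2π)) ∫ f(s) e^{-i t s} ds` used in the paper. -/
noncomputable def fourierHat (f : ℝ → ℂ) (t : ℝ) : ℂ :=
  (1 / (2 * Real.pi)) * ∫ s : ℝ, f s * Complex.exp (-(Complex.I * t * s))

lemma ENNReal.two_mul_le_add_sq (a b : ℝ≥0∞) : 2 * a * b ≤ a ^ 2 + b ^ 2 := by
  induction a using ENNReal.recTopCoe <;> induction b using ENNReal.recTopCoe
  all_goals try simp [ENNReal.top_pow, ENNReal.mul_top]
  exact_mod_cast _root_.two_mul_le_add_sq (_ : NNReal) _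

lemma ENNReal.tsum_ne_top_of_sq_le_geometric {a : ℕ → ℝ≥0∞} {c t : ℝ≥0∞} (hc : c ≠ ⊤)
    (ht : t < 1) (ha : ∀ n, a n ^ 2 ≤ c * t ^ n) : ∑' n, a n ≠ ⊤ := by
  set r : ℝ := ((2 : ℕ) : ℝ)⁻¹
  have hsq (x : ℝ≥0∞) : (x ^ r) ^ 2 = x := ENNReal.rpow_inv_natCast_pow two_ne_zero x
  have hbound (n : ℕ) : a n ≤ c ^ r * (t ^ r) ^ n := by
    rw [← ENNReal.pow_le_pow_left_iff two_ne_zero, mul_pow, ← pow_mul, mul_comm n 2, pow_mul,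
      hsq, hsq]
    exact ha n
  refine ne_top_of_le_ne_top ?_ (ENNReal.tsum_le_tsum hbound)
  rw [ENNReal.tsum_mul_left, ENNReal.tsum_geometric]
  exact ENNReal.mul_ne_top (ENNReal.rpow_ne_top_of_nonneg (by positivity) hc)
    (ENNReal.inv_ne_top.2 (tsub_pos_of_lt (ENNReal.rpow_lt_one ht (by positivity))).ne')

section KernelBound

variable {α : Type*} [MeasurableSpace α] {μ : Measure α} [SFinite μ]

/-- Schur's test, proved through `2 f(x) f(y) ≤ f(x)² + f(y)²`. -/
theorem lintegral_mul_lintegral_le_of_kernel_bound {f : α → ℝ≥0∞} {K : α → α → ℝ≥0∞}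
    {A : ℝ≥0∞} (hf : AEMeasurable f μ) (hK : Measurable (Function.uncurry K))
    (hK₁ : ∀ x, ∫⁻ y, K x y ∂μ ≤ A) (hK₂ : ∀ y, ∫⁻ x, K x y ∂μ ≤ A) :
    ∫⁻ x, f x * ∫⁻ y, K x y * f y ∂μ ∂μ ≤ A * ∫⁻ x, f x ^ 2 ∂μ := by
  have hKy (x : α) : Measurable (K x) := hK.comp measurable_prodMk_left
  have hKx (y : α) : Measurable (K · y) := hK.comp measurable_prodMk_right
  have hinner (x : α) : ∫⁻ y, K x y * (f x ^ 2 + f y ^ 2) ∂μ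
      ≤ A * f x ^ 2 + ∫⁻ y, K x y * f y ^ 2 ∂μ := by
    simp_rw [mul_add]
    rw [lintegral_add_left ((hKy x).mul_const _), lintegral_mul_const _ (hKy x)]
    gcongr
    exact hK₁ x
  have hswap : ∫⁻ x, ∫⁻ y, K x y * f y ^ 2 ∂μ ∂μ ≤ A * ∫⁻ y, f y ^ 2 ∂μ := by
    rw [lintegral_lintegral_swap (hK.aemeasurable.mul (hf.pow_const 2).comp_snd),
      ← lintegral_const_mul'' _ (hf.pow_const 2)]
    refine lintegral_mono fun y ↦ ?_
    rw [lintegral_mul_const'' _ (hKx y).aemeasurable]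
    gcongr
    exact hK₂ y
  rw [← ENNReal.mul_le_mul_iff_right two_ne_zero ENNReal.ofNat_ne_top]
  calc 2 * ∫⁻ x, f x * ∫⁻ y, K x y * f y ∂μ ∂μ
      ≤ ∫⁻ x, ∫⁻ y, K x y * (2 * f x * f y) ∂μ ∂μ := by
        refine (lintegral_const_mul_le _ _).trans (lintegral_mono fun x ↦ ?_)
        rw [← mul_assoc]
        refine (lintegral_const_mul_le _ _).trans_eq ?_
        congr 1 with y
        ring
    _ ≤ ∫⁻ x, ∫⁻ y, K x y * (f x ^ 2 + f y ^ 2) ∂μ ∂μ := by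
        gcongr with x y
        exact ENNReal.two_mul_le_add_sq _ _
    _ ≤ ∫⁻ x, (A * f x ^ 2 + ∫⁻ y, K x y * f y ^ 2 ∂μ) ∂μ := lintegral_mono hinner
    _ ≤ 2 * (A * ∫⁻ x, f x ^ 2 ∂μ) := by
        rw [lintegral_add_left' ((hf.pow_const 2).const_mul A),
          lintegral_const_mul'' _ (hf.pow_const 2), two_mul]
        gcongr

theorem sq_lintegral_le_measure_univ_mul {f : α → ℝ≥0∞} (hf : AEMeasurable f μ) :
    (∫⁻ x, f x ∂μ) ^ 2 ≤ μ Set.univ * ∫⁻ x, f x ^ 2 ∂μ := by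
  have := lintegral_mul_lintegral_le_of_kernel_bound (K := fun _ _ ↦ 1) hf measurable_const
    (fun _ ↦ lintegral_one.le) (fun _ ↦ lintegral_one.le)
  simp only [one_mul] at this
  rwa [lintegral_mul_const'' _ hf, ← sq] at this

end KernelBound

lemma eLpNorm_two_sq_eq_lintegral {α F : Type*} [MeasurableSpace α] {μ : Measure α}
    [NormedAddCommGroup F] (f : α → F) : eLpNorm f 2 μ ^ 2 = ∫⁻ x, ‖f x‖ₑ ^ 2 ∂μ := by
  simpa using eLpNorm_nnreal_pow_eq_lintegral (f := f) (μ := μ) (p := 2) two_ne_zero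

section GaussKernel

variable {V : Type*} [NormedAddCommGroup V] [InnerProductSpace ℝ V]

/-- The heat kernel: the inverse Fourier transform of `ξ ↦ e^(-ε‖ξ‖²)`. -/
noncomputable def gaussKernel (ε : ℝ) (y : V) : ℝ :=
  (π / ε) ^ (finrank ℝ V / 2 : ℝ) * Real.exp (-π ^ 2 * ‖y‖ ^ 2 / ε)

lemma gaussKernel_nonneg {ε : ℝ} (hε : 0 < ε) (y : V) : 0 ≤ gaussKernel ε y := by
  unfold gaussKernel; positivity

lemma gaussKernel_neg (ε : ℝ) (y : V) : gaussKernel ε (-y) = gaussKernel ε y := by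
  simp [gaussKernel]

lemma continuous_gaussKernel (ε : ℝ) : Continuous (gaussKernel ε : V → ℝ) := by
  unfold gaussKernel; fun_prop

variable [FiniteDimensional ℝ V] [MeasurableSpace V] [BorelSpace V]

lemma integral_gaussKernel {ε : ℝ} (hε : 0 < ε) : ∫ y : V, gaussKernel ε y = 1 := by
  have h := GaussianFourier.integral_rexp_neg_mul_sq_norm (V := V) (b := π ^ 2 / ε)
    (by positivity)
  have hexp (y : V) : Real.exp (-π ^ 2 * ‖y‖ ^ 2 / ε) = Real.exp (-(π ^ 2 / ε) * ‖y‖ ^ 2) := by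
    ring_nf
  simp only [gaussKernel, integral_const_mul, hexp, h]
  rw [← Real.mul_rpow (by positivity) (by positivity)]
  field_simp
  simp

lemma lintegral_gaussKernel_sub {ε : ℝ} (hε : 0 < ε) (x : V) :
    ∫⁻ y, ENNReal.ofReal (gaussKernel ε (y - x)) = 1 := by
  have hint : Integrable (gaussKernel ε : V → ℝ) :=
    .of_integral_ne_zero (by rw [integral_gaussKernel hε]; exact one_ne_zero)
  rw [lintegral_sub_right_eq_self (fun y ↦ ENNReal.ofReal (gaussKernel ε y)),
    ← ofReal_integral_eq_lintegral_ofReal hint (.of_forall (gaussKernel_nonneg hε)),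
    integral_gaussKernel hε, ENNReal.ofReal_one]

lemma fourier_modulated_gaussian_eq_gaussKernel {ε : ℝ} (hε : 0 < ε) (x y : V) :
    𝓕 (fun ξ : V ↦ cexp (-ε * ‖ξ‖ ^ 2 + 2 * π * I * ⟪x, ξ⟫)) y = gaussKernel ε (x - y) := by
  rw [fourier_gaussian_innerProductSpace' (by simpa using hε), gaussKernel, ofReal_mul,
    ofReal_cpow (by positivity), ofReal_exp]
  push_cast
  ring_nf

lemma integrable_exp_neg_mul_sq_norm {ε : ℝ} (hε : 0 < ε) :
    Integrable (fun ξ : V ↦ Real.exp (-ε * ‖ξ‖ ^ 2)) :=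
  .of_integral_ne_zero <| by
    rw [GaussianFourier.integral_rexp_neg_mul_sq_norm hε]
    positivity

end GaussKernel

section FourierL1

variable {V E : Type*} [NormedAddCommGroup V] [InnerProductSpace ℝ V] [FiniteDimensional ℝ V]
  [MeasurableSpace V] [BorelSpace V] [NormedAddCommGroup E] [NormedSpace ℂ E]

theorem Real.continuous_fourier {f : V → E} (hf : Integrable f) : Continuous (𝓕 f) :=
  VectorFourier.fourierIntegral_continuous Real.continuous_fourierChar continuous_inner hf

theorem Real.norm_fourier_le_integral_norm (f : V → E) (ξ : V) : ‖𝓕 f ξ‖ ≤ ∫ v, ‖f v‖ :=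
  VectorFourier.norm_fourierIntegral_le_integral_norm _ _ _ _ _

theorem Real.fourier_sub_comp_add_right {g : V → E} (hg : Integrable g) (h ξ : V) :
    𝓕 (fun v ↦ g v - g (v + h)) ξ = (1 - (𝐞 ⟪h, ξ⟫ : ℂ)) • 𝓕 g ξ := by
  have hshift :=
    congrFun (VectorFourier.fourierIntegral_comp_add_right 𝐞 volume (innerₗ V) g h) ξ
  have hsub : 𝓕 (fun v ↦ g v - g (v + h)) ξ = 𝓕 g ξ - 𝓕 (fun v ↦ g (v + h)) ξ := by
    simp only [Real.fourier_eq, smul_sub]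
    exact integral_sub ((Real.fourierIntegral_convergent_iff ξ).2 hg)
      ((Real.fourierIntegral_convergent_iff ξ).2 (hg.comp_add_right h))
  rw [hsub]
  change _ - VectorFourier.fourierIntegral 𝐞 volume (innerₗ V) (g ∘ fun v ↦ v + h) ξ = _
  rw [hshift, sub_smul, one_smul, Circle.smul_def]
  rfl

theorem Real.integral_inner_fourier_eq {H : Type*} [NormedAddCommGroup H]
    [InnerProductSpace ℂ H] [CompleteSpace H] {f g : V → H} (hf : Integrable f)
    (hg : Integrable g) : ∫ ξ, inner ℂ (𝓕 f ξ) (g ξ) = ∫ x, inner ℂ (f x) (𝓕⁻ g x) := by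
  have := VectorFourier.integral_sesq_fourierIntegral_eq_neg_flip (innerSL ℂ)
    (L := innerₗ V) Real.continuous_fourierChar continuous_inner hf hg
  simp only [flip_innerₗ, innerSL_apply_apply] at this
  exact this

lemma fourierInv_gaussian_smul_fourier [CompleteSpace E] {ε : ℝ} (hε : 0 < ε) {g : V → E}
    (hg : Integrable g) (x : V) :
    𝓕⁻ (fun ξ ↦ (Real.exp (-ε * ‖ξ‖ ^ 2) : ℂ) • 𝓕 g ξ) x =
      ∫ y, (gaussKernel ε (x - y) : ℂ) • g y := by
  have hψ : Integrable (fun ξ : V ↦ cexp (-ε * ‖ξ‖ ^ 2 + 2 * π * I * ⟪x, ξ⟫)) :=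
    GaussianFourier.integrable_cexp_neg_mul_sq_norm_add (by simpa using hε) _ _
  have := VectorFourier.integral_fourierIntegral_smul_eq_flip (L := innerₗ V)
      Real.continuous_fourierChar continuous_inner hψ hg
  simp only [flip_innerₗ] at this
  change ∫ y, 𝓕 (fun ξ : V ↦ cexp (-ε * ‖ξ‖ ^ 2 + 2 * π * I * ⟪x, ξ⟫)) y • g y =
    ∫ ξ, _ • 𝓕 g ξ at this
  simp_rw [fourier_modulated_gaussian_eq_gaussKernel hε] at this
  rw [this, Real.fourierInv_eq]
  congr 1 with ξ
  rw [Circle.smul_def, smul_smul, Real.fourierChar_apply, ofReal_exp, ← Complex.exp_add]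
  congr 2
  push_cast
  rw [real_inner_comm]
  ring

lemma integral_gaussian_mul_norm_fourier_sq_eq {ε : ℝ} (hε : 0 < ε) {g : V → ℂ}
    (hg : Integrable g) :
    ((∫ ξ, Real.exp (-ε * ‖ξ‖ ^ 2) * ‖𝓕 g ξ‖ ^ 2 : ℝ) : ℂ) =
      ∫ x, conj (g x) * ∫ y, (gaussKernel ε (x - y) : ℂ) • g y := by
  have hGĝ : Integrable (fun ξ ↦ (Real.exp (-ε * ‖ξ‖ ^ 2) : ℂ) • 𝓕 g ξ) :=
    (integrable_exp_neg_mul_sq_norm hε).ofReal.mul_bdd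
      (Real.continuous_fourier hg).aestronglyMeasurable
      (.of_forall (Real.norm_fourier_le_integral_norm g))
  simp_rw [← fourierInv_gaussian_smul_fourier hε hg, ← RCLike.inner_apply',
    ← Real.integral_inner_fourier_eq hg hGĝ, ← integral_complex_ofReal]
  congr 1 with ξ
  rw [RCLike.inner_apply', smul_eq_mul, mul_left_comm, conj_mul']
  push_cast
  rfl

theorem lintegral_gaussian_mul_enorm_fourier_sq_le {ε : ℝ} (hε : 0 < ε) {g : V → ℂ}
    (hg : Integrable g) :
    ∫⁻ ξ, ENNReal.ofReal (Real.exp (-ε * ‖ξ‖ ^ 2)) * ‖𝓕 g ξ‖ₑ ^ 2 ≤ ∫⁻ x, ‖g x‖ₑ ^ 2 := by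
  have hint : Integrable (fun ξ ↦ Real.exp (-ε * ‖ξ‖ ^ 2) * ‖𝓕 g ξ‖ ^ 2) :=
    (integrable_exp_neg_mul_sq_norm hε).mul_bdd
      ((Real.continuous_fourier hg).norm.pow 2).aestronglyMeasurable
      (.of_forall fun ξ ↦ by
        simpa using pow_le_pow_left₀ (norm_nonneg _) (Real.norm_fourier_le_integral_norm g ξ) 2)
  have hnonneg : 0 ≤ ∫ ξ, Real.exp (-ε * ‖ξ‖ ^ 2) * ‖𝓕 g ξ‖ ^ 2 :=
    integral_nonneg fun ξ ↦ by positivity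
  calc ∫⁻ ξ, ENNReal.ofReal (Real.exp (-ε * ‖ξ‖ ^ 2)) * ‖𝓕 g ξ‖ₑ ^ 2
      = ‖((∫ ξ, Real.exp (-ε * ‖ξ‖ ^ 2) * ‖𝓕 g ξ‖ ^ 2 : ℝ) : ℂ)‖ₑ := by
        rw [← ofReal_norm, Complex.norm_real, Real.norm_of_nonneg hnonneg,
          ofReal_integral_eq_lintegral_ofReal hint (.of_forall fun ξ ↦ by positivity)]
        congr 1 with ξ
        rw [ENNReal.ofReal_mul (Real.exp_nonneg _), ENNReal.ofReal_pow (norm_nonneg _),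
          ofReal_norm]
    _ ≤ ∫⁻ x, ‖g x‖ₑ * ∫⁻ y, ENNReal.ofReal (gaussKernel ε (x - y)) * ‖g y‖ₑ := by
        rw [integral_gaussian_mul_norm_fourier_sq_eq hε hg]
        refine (enorm_integral_le_lintegral_enorm _).trans (lintegral_mono fun x ↦ ?_)
        rw [enorm_mul, RCLike.enorm_conj]
        gcongr
        refine (enorm_integral_le_lintegral_enorm _).trans_eq (lintegral_congr fun y ↦ ?_)
        rw [enorm_smul, ← ofReal_norm, Complex.norm_real,
          Real.norm_of_nonneg (gaussKernel_nonneg hε _)]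
    _ ≤ 1 * ∫⁻ x, ‖g x‖ₑ ^ 2 := by
        refine lintegral_mul_lintegral_le_of_kernel_bound hg.1.enorm ?_ (fun x ↦ ?_) (fun y ↦ ?_)
        · exact ENNReal.measurable_ofReal.comp
            ((continuous_gaussKernel ε).comp (continuous_fst.sub continuous_snd)).measurable
        · simp_rw [← gaussKernel_neg ε (x - _), neg_sub, lintegral_gaussKernel_sub hε, le_refl]
        · rw [lintegral_gaussKernel_sub hε]
    _ = ∫⁻ x, ‖g x‖ₑ ^ 2 := one_mul _

end FourierL1

lemma one_le_norm_one_sub_fourierChar {θ : ℝ} (h₁ : 1 / 4 ≤ |θ|) (h₂ : |θ| ≤ 1 / 2) :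
    1 ≤ ‖1 - (𝐞 θ : ℂ)‖ := by
  have hcos : Real.cos (2 * π * θ) ≤ 0 := by
    rw [← Real.cos_abs, abs_mul, abs_of_pos Real.two_pi_pos]
    apply Real.cos_nonpos_of_pi_div_two_le_of_le <;> nlinarith [Real.pi_pos]
  calc (1 : ℝ) ≤ (1 - (𝐞 θ : ℂ)).re := by
        rw [Real.fourierChar_apply, sub_re, one_re, exp_ofReal_mul_I_re]
        linarith
    _ ≤ ‖1 - (𝐞 θ : ℂ)‖ := Complex.re_le_norm _

def dyadicBand (h : ℝ) : Set ℝ := {ξ | 1 / 4 ≤ |h * ξ| ∧ |h * ξ| ≤ 1 / 2}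

lemma volume_dyadicBand_le {h : ℝ} (hh : 0 < h) :
    volume (dyadicBand h) ≤ ENNReal.ofReal h⁻¹ := by
  have hsub : dyadicBand h ⊆ Set.Icc (-(2 * h)⁻¹) (2 * h)⁻¹ := fun ξ hξ ↦ by
    have := hξ.2
    rw [abs_mul, abs_of_pos hh] at this
    rw [Set.mem_Icc, ← abs_le, ← one_div, le_div_iff₀ (by positivity)]
    linarith
  refine (measure_mono hsub).trans_eq ?_
  rw [Real.volume_Icc]
  congr 1
  field_simp
  ring

lemma subset_iUnion_dyadicBand : {ξ : ℝ | 1 ≤ |ξ|} ⊆ ⋃ n : ℕ, dyadicBand (4⁻¹ * 2⁻¹ ^ n) := by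
  intro ξ (hξ : 1 ≤ |ξ|)
  obtain ⟨n, hn₁, hn₂⟩ := exists_nat_pow_near hξ one_lt_two
  have h2n : (0 : ℝ) < 2 ^ n := by positivity
  have h₁ : 1 ≤ |ξ| / 2 ^ n := (one_le_div h2n).2 hn₁
  have h₂ : |ξ| / 2 ^ n ≤ 2 := (div_le_iff₀ h2n).2 (by rw [pow_succ] at hn₂; linarith)
  refine Set.mem_iUnion.2 ⟨n, ?_, ?_⟩ <;>
    rw [abs_mul, abs_of_pos (by positivity), inv_pow, mul_assoc, ← div_eq_inv_mul (|ξ|)] <;>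
    linarith

lemma enorm_fourier_sq_le_of_mem_dyadicBand {f : ℝ → ℂ} (hf : Integrable f) {h ξ : ℝ}
    (hξ : ξ ∈ dyadicBand h) :
    ‖𝓕 f ξ‖ₑ ^ 2 ≤ ENNReal.ofReal (Real.exp 1) *
      (ENNReal.ofReal (Real.exp (-(4 * h ^ 2) * ‖ξ‖ ^ 2)) *
        ‖𝓕 (fun u ↦ f u - f (u + h)) ξ‖ₑ ^ 2) := by
  obtain ⟨h₁, h₂⟩ := hξ
  have hphase : ‖𝓕 f ξ‖ₑ ≤ ‖𝓕 (fun u ↦ f u - f (u + h)) ξ‖ₑ := by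
    rw [Real.fourier_sub_comp_add_right hf, enorm_smul, RCLike.inner_apply', conj_trivial]
    refine le_mul_of_one_le_left bot_le ?_
    rw [← ofReal_norm, ← ENNReal.ofReal_one]
    exact ENNReal.ofReal_le_ofReal (one_le_norm_one_sub_fourierChar h₁ h₂)
  have hweight : 1 ≤ Real.exp 1 * Real.exp (-(4 * h ^ 2) * ‖ξ‖ ^ 2) := by
    rw [← Real.exp_add, Real.one_le_exp_iff, Real.norm_eq_abs]
    have := pow_le_pow_left₀ (abs_nonneg _) h₂ 2
    rw [abs_mul, mul_pow, sq_abs, sq_abs] at this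
    nlinarith [sq_abs ξ]
  calc ‖𝓕 f ξ‖ₑ ^ 2 ≤ 1 * ‖𝓕 (fun u ↦ f u - f (u + h)) ξ‖ₑ ^ 2 := by
        rw [one_mul]; gcongr
    _ ≤ _ := by
        rw [← mul_assoc, ← ENNReal.ofReal_mul (Real.exp_nonneg _)]
        gcongr
        rwa [← ENNReal.ofReal_one, ENNReal.ofReal_le_ofReal_iff (by positivity)]

theorem setLIntegral_dyadicBand_enorm_fourier_sq_le {f : ℝ → ℂ} (hf : Integrable f) {h : ℝ}
    (hh : h ≠ 0) :
    ∫⁻ ξ in dyadicBand h, ‖𝓕 f ξ‖ₑ ^ 2 ≤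
      ENNReal.ofReal (Real.exp 1) * ∫⁻ u, ‖f u - f (u + h)‖ₑ ^ 2 := by
  have hΔ : Integrable (fun u ↦ f u - f (u + h)) := hf.sub (hf.comp_add_right h)
  calc ∫⁻ ξ in dyadicBand h, ‖𝓕 f ξ‖ₑ ^ 2
      ≤ ∫⁻ ξ in dyadicBand h, ENNReal.ofReal (Real.exp 1) *
          (ENNReal.ofReal (Real.exp (-(4 * h ^ 2) * ‖ξ‖ ^ 2)) *
            ‖𝓕 (fun u ↦ f u - f (u + h)) ξ‖ₑ ^ 2) :=
        setLIntegral_mono (by have := Real.continuous_fourier hΔ; fun_prop) fun ξ hξ ↦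
          enorm_fourier_sq_le_of_mem_dyadicBand hf hξ
    _ ≤ ENNReal.ofReal (Real.exp 1) *
          ∫⁻ ξ, ENNReal.ofReal (Real.exp (-(4 * h ^ 2) * ‖ξ‖ ^ 2)) *
            ‖𝓕 (fun u ↦ f u - f (u + h)) ξ‖ₑ ^ 2 := by
        rw [lintegral_const_mul' _ _ ENNReal.ofReal_ne_top]
        exact mul_le_mul_right (setLIntegral_le_lintegral _ _) _
    _ ≤ _ := mul_le_mul_right (lintegral_gaussian_mul_enorm_fourier_sq_le
          (mul_pos four_pos (sq_pos_of_ne_zero hh)) hΔ) _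

theorem integrable_of_setLIntegral_dyadicBand_le {E : Type*} [NormedAddCommGroup E]
    {F : ℝ → E} (hF : LocallyIntegrable F) {α C : ℝ} (hα : 0 < α)
    (hband : ∀ h : ℝ, 0 < h →
      ∫⁻ ξ in dyadicBand h, ‖F ξ‖ₑ ^ 2 ≤ ENNReal.ofReal (C * h ^ (1 + α))) :
    Integrable F := by
  set h : ℕ → ℝ := fun n ↦ 4⁻¹ * 2⁻¹ ^ n
  have hpos (n : ℕ) : 0 < h n := by positivity
  have hmass (n : ℕ) : (∫⁻ ξ in dyadicBand (h n), ‖F ξ‖ₑ) ^ 2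
      ≤ ENNReal.ofReal (C * 4⁻¹ ^ α) * ENNReal.ofReal (2⁻¹ ^ α) ^ n := by
    calc (∫⁻ ξ in dyadicBand (h n), ‖F ξ‖ₑ) ^ 2
        ≤ volume (dyadicBand (h n)) * ∫⁻ ξ in dyadicBand (h n), ‖F ξ‖ₑ ^ 2 := by
          simpa using sq_lintegral_le_measure_univ_mul hF.aestronglyMeasurable.enorm.restrict
      _ ≤ ENNReal.ofReal (h n)⁻¹ * ENNReal.ofReal (C * h n ^ (1 + α)) :=
          mul_le_mul' (volume_dyadicBand_le (hpos n)) (hband _ (hpos n))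
      _ = ENNReal.ofReal (C * 4⁻¹ ^ α * (2⁻¹ ^ α) ^ n) := by
          rw [← ENNReal.ofReal_mul (inv_nonneg.2 (hpos n).le), Real.rpow_add (hpos n),
            Real.rpow_one, Real.mul_rpow (by norm_num) (by positivity),
            Real.rpow_pow_comm (by norm_num)]
          congr 1
          field_simp [(hpos n).ne']
      _ = _ := by
          rw [ENNReal.ofReal_mul' (by positivity), ENNReal.ofReal_pow (by positivity)]
  have hfar : IntegrableOn F (⋃ n, dyadicBand (h n)) := by
    refine ⟨hF.aestronglyMeasurable.restrict, (lintegral_iUnion_le _ _).trans_lt ?_⟩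
    exact lt_top_iff_ne_top.2 (ENNReal.tsum_ne_top_of_sq_le_geometric ENNReal.ofReal_ne_top
      (ENNReal.ofReal_lt_one.2 (Real.rpow_lt_one (by norm_num) (by norm_num) hα)) hmass)
  have hcover : Set.univ ⊆ Set.Icc (-1) 1 ∪ ⋃ n, dyadicBand (h n) := fun ξ _ ↦ by
    rcases le_or_gt |ξ| 1 with hξ | hξ
    · exact Or.inl (abs_le.1 hξ)
    · exact Or.inr (subset_iUnion_dyadicBand hξ.le)
  exact integrableOn_univ.1
    (((hF.integrableOn_isCompact isCompact_Icc).union hfar).mono_set hcover)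

lemma fourierHat_eq_fourier (f : ℝ → ℂ) :
    fourierHat f = fun t ↦ ((2 * π)⁻¹ : ℂ) * 𝓕 f (t / (2 * π)) := by
  ext t
  rw [fourierHat, Real.fourier_real_eq_integral_exp_smul, one_div]
  congr 2 with s
  rw [smul_eq_mul, mul_comm]
  congr 2
  push_cast
  field_simp

/-- If `f ∈ L¹(ℝ)` satisfies `‖f - T_h f‖₂² = O(|h|^{1+α})` for some `α > 0`,
where `(T_h f)(u) = f(u + h)`, then `f̂ ∈ L¹(ℝ)`. -/
theorem stmt0 (f : ℝ → ℂ) (hf : Integrable f (volume : Measure ℝ))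
    (α : ℝ) (hα : 0 < α) (C : ℝ)
    (hbound : ∀ h : ℝ,
      eLpNorm (fun u : ℝ => f u - f (u + h)) 2 volume ^ 2
        ≤ ENNReal.ofReal (C * |h| ^ (1 + α))) :
    Integrable (fourierHat f) (volume : Measure ℝ) := by
  have hband (h : ℝ) (hh : 0 < h) : ∫⁻ ξ in dyadicBand h, ‖𝓕 f ξ‖ₑ ^ 2 ≤
      ENNReal.ofReal (Real.exp 1 * C * h ^ (1 + α)) :=
    calc ∫⁻ ξ in dyadicBand h, ‖𝓕 f ξ‖ₑ ^ 2
        ≤ ENNReal.ofReal (Real.exp 1) * ∫⁻ u, ‖f u - f (u + h)‖ₑ ^ 2 :=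
          setLIntegral_dyadicBand_enorm_fourier_sq_le hf hh.ne'
      _ ≤ ENNReal.ofReal (Real.exp 1) * ENNReal.ofReal (C * |h| ^ (1 + α)) := by
          rw [← eLpNorm_two_sq_eq_lintegral]
          gcongr
          exact hbound h
      _ = _ := by rw [abs_of_pos hh, ← ENNReal.ofReal_mul (Real.exp_nonneg _), mul_assoc]
  have hF : Integrable (𝓕 f) :=
    integrable_of_setLIntegral_dyadicBand_le (Real.continuous_fourier hf).locallyIntegrable hα hband
  rw [fourierHat_eq_fourier]
  exact (hF.comp_div (by positivity)).const_mul _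
end

section
/- If f ∈ L¹(ℝ) is absolutely continuous with f' ∈ L¹(ℝ) ∩ Lᵖ(ℝ) for some p > 1, then for all h > 0, ‖T_h f - f‖₂² ≤ h^{2 - 1/p} ‖f'‖₁ ‖f'‖_p, where (T_h f)(u) = f(u+h). -/
/-!
On a window of length `h`, `f (u + h) - f u` is the integral of `f'`, so its norm is at most the
local mass `F u = ∫_{(u, u + h]} ‖f'‖`. Squaring, one factor `F u` is bounded uniformly by Hölder,
`F u ≤ ‖f'‖_p h^{1 - 1/p}`, while the other integrates exactly by Fubini: `∫ F = h ‖f'‖₁`.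
-/

open MeasureTheory Set

open scoped ENNReal

theorem enorm_intervalIntegral_le_setLIntegral_Ioc {E : Type*} [NormedAddCommGroup E]
    [NormedSpace ℝ E] (g : ℝ → E) {a b : ℝ} (hab : a ≤ b) :
    ‖∫ s in a..b, g s‖ₑ ≤ ∫⁻ s in Ioc a b, ‖g s‖ₑ := by
  rw [intervalIntegral.integral_of_le hab]
  exact enorm_integral_le_lintegral_enorm _

theorem setLIntegral_Ioc_enorm_le_eLpNorm_mul {E : Type*} [NormedAddCommGroup E] {g : ℝ → E}
    (hg : AEStronglyMeasurable g) {p : ℝ≥0∞} (hp : 1 ≤ p) (u h : ℝ) :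
    ∫⁻ s in Ioc u (u + h), ‖g s‖ₑ ≤ eLpNorm g p * ENNReal.ofReal h ^ (1 - 1 / p.toReal) := by
  have holder := eLpNorm_le_eLpNorm_mul_rpow_measure_univ hp (hg.restrict (s := Ioc u (u + h)))
  rw [eLpNorm_one_eq_lintegral_enorm, Measure.restrict_apply_univ, Real.volume_Ioc,
    add_sub_cancel_left, ENNReal.toReal_one, div_one] at holder
  refine holder.trans ?_
  gcongr
  exact Measure.restrict_le_self

theorem lintegral_setLIntegral_Ioc_add {g : ℝ → ℝ≥0∞} (hg : AEMeasurable g) (h : ℝ) :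
    ∫⁻ u, ∫⁻ s in Ioc u (u + h), g s = ENNReal.ofReal h * ∫⁻ s, g s := by
  have hg' : Measurable (hg.mk g) := hg.measurable_mk
  calc ∫⁻ u, ∫⁻ s in Ioc u (u + h), g s
      = ∫⁻ u, ∫⁻ s in Ioc u (u + h), hg.mk g s :=
        lintegral_congr fun u => lintegral_congr_ae (ae_restrict_of_ae hg.ae_eq_mk)
    _ = ∫⁻ u, ∫⁻ t in Ioc 0 h, hg.mk g (u + t) := by
        refine lintegral_congr fun u => ?_
        rw [← (measurePreserving_add_left volume u).setLIntegral_comp_preimage_emb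
          (measurableEmbedding_addLeft u)]
        simp
    _ = ∫⁻ t in Ioc 0 h, ∫⁻ u, hg.mk g (u + t) :=
        lintegral_lintegral_swap (by fun_prop)
    _ = ∫⁻ t in Ioc 0 h, ∫⁻ u, hg.mk g u := by
        simp only [lintegral_add_right_eq_self]
    _ = ENNReal.ofReal h * ∫⁻ s, g s := by
        rw [setLIntegral_const, Real.volume_Ioc, sub_zero, mul_comm,
          lintegral_congr_ae hg.ae_eq_mk]

theorem eLpNorm_two_sq_le_mul_lintegral {α E : Type*} [MeasurableSpace α] [NormedAddCommGroup E]
    {μ : Measure α} {φ : α → E} {F : α → ℝ≥0∞} {C : ℝ≥0∞} (hC : C ≠ ∞)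
    (hφF : ∀ x, ‖φ x‖ₑ ≤ F x) (hFC : ∀ x, F x ≤ C) :
    eLpNorm φ 2 μ ^ 2 ≤ C * ∫⁻ x, F x ∂μ := by
  have hsq := eLpNorm_nnreal_pow_eq_lintegral (f := φ) (μ := μ) (p := 2) two_ne_zero
  simp only [ENNReal.coe_ofNat, NNReal.coe_ofNat, ENNReal.rpow_ofNat] at hsq
  calc eLpNorm φ 2 μ ^ 2 = ∫⁻ x, ‖φ x‖ₑ ^ 2 ∂μ := hsq
    _ ≤ ∫⁻ x, C * F x ∂μ := lintegral_mono fun x => by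
        rw [sq]
        exact mul_le_mul' ((hφF x).trans (hFC x)) (hφF x)
    _ = C * ∫⁻ x, F x ∂μ := lintegral_const_mul' C F hC

theorem ofReal_rpow_one_sub_inv_mul_self {h : ℝ} (hh : 0 < h) (p : ℝ) :
    ENNReal.ofReal h ^ (1 - 1 / p) * ENNReal.ofReal h = ENNReal.ofReal (h ^ (2 - 1 / p)) := by
  rw [ENNReal.ofReal_rpow_of_pos hh, ← ENNReal.ofReal_mul (by positivity),
    ← Real.rpow_add_one hh.ne']
  ring_nf

theorem stmt2_general (f f' : ℝ → ℂ)
    (hac : ∀ a b : ℝ, f b - f a = ∫ s in a..b, f' s)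
    (p : ℝ) (hp : 1 < p)
    (hf'p : MemLp f' (ENNReal.ofReal p) (volume : Measure ℝ)) :
    ∀ h : ℝ, 0 < h →
      eLpNorm (fun u : ℝ => f (u + h) - f u) 2 volume ^ 2
        ≤ ENNReal.ofReal (h ^ (2 - 1 / p)) * eLpNorm f' 1 volume *
            eLpNorm f' (ENNReal.ofReal p) volume := by
  intro h hh
  have hlocal : ∀ u, ‖f (u + h) - f u‖ₑ ≤ ∫⁻ s in Ioc u (u + h), ‖f' s‖ₑ := fun u => by
    rw [hac]
    exact enorm_intervalIntegral_le_setLIntegral_Ioc f' (by linarith)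
  have hholder : ∀ u, ∫⁻ s in Ioc u (u + h), ‖f' s‖ₑ
      ≤ eLpNorm f' (ENNReal.ofReal p) * ENNReal.ofReal h ^ (1 - 1 / p) := fun u => by
    simpa only [ENNReal.toReal_ofReal (by linarith : 0 ≤ p)] using
      setLIntegral_Ioc_enorm_le_eLpNorm_mul hf'p.1 (ENNReal.one_le_ofReal.mpr hp.le) u h
  have hmass := lintegral_setLIntegral_Ioc_add hf'p.1.enorm h
  calc _ ≤ _ := eLpNorm_two_sq_le_mul_lintegral
          (ENNReal.mul_ne_top hf'p.2.ne (by finiteness)) hlocal hholder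
    _ = _ := by
      rw [hmass, ← eLpNorm_one_eq_lintegral_enorm, ← ofReal_rpow_one_sub_inv_mul_self hh]
      ring

/-- If `f ∈ L¹(ℝ)` is absolutely continuous (i.e. `f(b) - f(a) = ∫_a^b f'`) with
`f' ∈ L¹(ℝ) ∩ Lᵖ(ℝ)` for some `p > 1`, then for all `h > 0`,
`‖T_h f - f‖₂² ≤ h^{2 - 1/p} ‖f'‖₁ ‖f'‖_p`, where `(T_h f)(u) = f(u + h)`. -/
theorem stmt2 (f f' : ℝ → ℂ) (hf : Integrable f (volume : Measure ℝ))
    (hac : ∀ a b : ℝ, f b - f a = ∫ s in a..b, f' s)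
    (hf'1 : Integrable f' (volume : Measure ℝ))
    (p : ℝ) (hp : 1 < p)
    (hf'p : MemLp f' (ENNReal.ofReal p) (volume : Measure ℝ)) :
    ∀ h : ℝ, 0 < h →
      eLpNorm (fun u : ℝ => f (u + h) - f u) 2 volume ^ 2
        ≤ ENNReal.ofReal (h ^ (2 - 1 / p)) * eLpNorm f' 1 volume *
            eLpNorm f' (ENNReal.ofReal p) volume :=
  stmt2_general f f' hac p hp hf'p
end

section
/- Let B be a densely-defined self-adjoint operator on a Hilbert space H and let C be a bounded operator on H such that the commutator [B, C] has a bounded extension to H. Then the commutator [B, e^{iC}] also has a bounded extension, and [B, e^{iC}] = i ∫₀¹ e^{i(1-t)C} [B,C] e^{itC} dt. -/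
/-!
Put `A = i C` and `X = i K`, so that `B (A x) = A (B x) + X x` on `dom B`. By induction `Aᵐ`
preserves `dom B` and `[B, Aᵐ] = ∑_{j<m} Aʲ X A^{m-1-j}`. Summing the exponential series and
using that the self-adjoint `B` is closed, `e^A` preserves `dom B` and
`[B, e^A] = ∑ₘ (1/m!) ∑_{j<m} Aʲ X A^{m-1-j}`. Expanding `e^{(1-t)A} X e^{tA}` as a double series
and integrating term by term with `∫₀¹ (1-t)ʲ tᵏ dt = j! k! / (j+k+1)!` identifies this sum with
`∫₀¹ e^{(1-t)A} X e^{tA} dt`.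
-/

open MeasureTheory intervalIntegral NormedSpace Finset Filter
open scoped Nat

theorem LinearPMap.IsClosed.exists_apply_eq_of_hasSum {R E F ι : Type*} [CommRing R]
    [AddCommGroup E] [AddCommGroup F] [Module R E] [Module R F]
    [TopologicalSpace E] [TopologicalSpace F] [ContinuousAdd E] [ContinuousAdd F]
    {B : E →ₗ.[R] F} (hB : B.IsClosed) {f : ι → B.domain} {u : E} {v : F}
    (hu : HasSum (fun i => (f i : E)) u) (hv : HasSum (fun i => B (f i)) v) :
    ∃ h : u ∈ B.domain, B ⟨u, h⟩ = v := by
  have hgraph : (u, v) ∈ B.graph :=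
    hB.mem_of_tendsto (hu.prodMk hv)
      (Eventually.of_forall fun s => B.graph.sum_mem fun i _ => B.mem_graph (f i))
  obtain ⟨y, rfl, rfl⟩ := B.mem_graph_iff.mp hgraph
  exact ⟨y.2, rfl⟩

theorem HasSum.sum_antidiagonal {α : Type*} [AddCommMonoid α] [TopologicalSpace α]
    [ContinuousAdd α] [RegularSpace α] {g : ℕ × ℕ → α} {a : α} (h : HasSum g a) :
    HasSum (fun n => ∑ p ∈ antidiagonal n, g p) a :=
  (HasAntidiagonal.sigmaAntidiagonalEquivProd.hasSum_iff.mpr h).sigma fun n =>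
    (antidiagonal n).hasSum g

theorem integral_one_sub_pow_mul_pow (j k : ℕ) :
    ∫ t in (0:ℝ)..1, (1 - t) ^ j * t ^ k = j ! * k ! / (j + k + 1)! := by
  have hbeta : Complex.betaIntegral (k + 1) (j + 1)
      = ∫ t in (0:ℝ)..1, (((1 - t) ^ j * t ^ k : ℝ) : ℂ) := by
    rw [Complex.betaIntegral]
    refine integral_congr fun t _ => ?_
    push_cast
    simp only [add_sub_cancel_right, Complex.cpow_natCast]
    ring
  have hgamma := Complex.Gamma_mul_Gamma_eq_betaIntegral (s := (k : ℂ) + 1) (t := (j : ℂ) + 1)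
    (by simp only [Complex.add_re, Complex.natCast_re, Complex.one_re]; positivity)
    (by simp only [Complex.add_re, Complex.natCast_re, Complex.one_re]; positivity)
  rw [hbeta, intervalIntegral.integral_ofReal,
    show (k : ℂ) + 1 + (j + 1) = ((j + k + 1 : ℕ) : ℂ) + 1 by push_cast; ring,
    Complex.Gamma_nat_eq_factorial, Complex.Gamma_nat_eq_factorial,
    Complex.Gamma_nat_eq_factorial] at hgamma
  rw [eq_div_iff (by positivity)]
  apply Complex.ofReal_injective
  push_cast at hgamma ⊢
  linear_combination -hgamma

section BanachAlgebra

variable {𝔸 : Type*} [NormedRing 𝔸] [NormedAlgebra ℝ 𝔸]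

theorem norm_inv_factorial_smul_smul_pow_le (A : 𝔸) {s : ℝ} (hs : |s| ≤ 1) (n : ℕ) :
    ‖(n ! : ℝ)⁻¹ • (s • A) ^ n‖ ≤ ‖(n ! : ℝ)⁻¹ • A ^ n‖ := by
  rw [smul_pow, smul_comm, norm_smul, Real.norm_eq_abs, abs_pow]
  exact mul_le_of_le_one_left (norm_nonneg _) (pow_le_one₀ (abs_nonneg s) hs)

variable [CompleteSpace 𝔸]

theorem hasSum_exp_mul_exp (A X : 𝔸) (s t : ℝ) :
    HasSum (fun p : ℕ × ℕ =>
        ((p.1 ! : ℝ)⁻¹ • (s • A) ^ p.1) * X * ((p.2 ! : ℝ)⁻¹ • (t • A) ^ p.2))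
      (exp (s • A) * X * exp (t • A)) := by
  have hs : HasSum (fun j : ℕ => (j ! : ℝ)⁻¹ • (s • A) ^ j * X) (exp (s • A) * X) :=
    (exp_series_hasSum_exp' (𝕂 := ℝ) (s • A)).mul_right X
  have ht : HasSum (fun k : ℕ => (k ! : ℝ)⁻¹ • (t • A) ^ k) (exp (t • A)) :=
    exp_series_hasSum_exp' (𝕂 := ℝ) (t • A)
  have hsX : Summable fun j : ℕ => ‖(j ! : ℝ)⁻¹ • (s • A) ^ j * X‖ :=
    ((norm_expSeries_summable' (𝕂 := ℝ) (s • A)).mul_right ‖X‖).of_nonneg_of_le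
      (fun _ => norm_nonneg _) fun _ => norm_mul_le _ _
  exact HasSum.mul (f := fun j => (j ! : ℝ)⁻¹ • (s • A) ^ j * X)
    (g := fun k => (k ! : ℝ)⁻¹ • (t • A) ^ k) hs ht
    (summable_mul_of_summable_norm (f := fun j => (j ! : ℝ)⁻¹ • (s • A) ^ j * X)
      (g := fun k => (k ! : ℝ)⁻¹ • (t • A) ^ k) hsX (norm_expSeries_summable' (𝕂 := ℝ) (t • A)))

theorem integral_inv_factorial_smul_pow_mul_inv_factorial_smul_pow (A X : 𝔸) (j k : ℕ) :
    ∫ t in (0:ℝ)..1, ((j ! : ℝ)⁻¹ • ((1 - t) • A) ^ j) * X * ((k ! : ℝ)⁻¹ • (t • A) ^ k)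
      = ((j + k + 1)! : ℝ)⁻¹ • (A ^ j * X * A ^ k) := by
  have hterm (t : ℝ) : ((j ! : ℝ)⁻¹ • ((1 - t) • A) ^ j) * X * ((k ! : ℝ)⁻¹ • (t • A) ^ k)
      = ((1 - t) ^ j * t ^ k * ((j ! : ℝ)⁻¹ * (k ! : ℝ)⁻¹)) • (A ^ j * X * A ^ k) := by
    simp only [smul_pow, smul_mul_assoc, mul_smul_comm, smul_smul]
    ring_nf
  simp only [hterm, intervalIntegral.integral_smul_const, intervalIntegral.integral_mul_const,
    integral_one_sub_pow_mul_pow]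
  congr 1
  field_simp

theorem hasSum_prod_integral_exp_mul_exp (A X : 𝔸) :
    HasSum (fun p : ℕ × ℕ => ((p.1 + p.2 + 1)! : ℝ)⁻¹ • (A ^ p.1 * X * A ^ p.2))
      (∫ t in (0:ℝ)..1, exp ((1 - t) • A) * X * exp (t • A)) := by
  have hle (p : ℕ × ℕ) {t : ℝ} (ht : t ∈ Set.uIoc 0 1) :
      ‖((p.1 ! : ℝ)⁻¹ • ((1 - t) • A) ^ p.1) * X * ((p.2 ! : ℝ)⁻¹ • (t • A) ^ p.2)‖
        ≤ ‖(p.1 ! : ℝ)⁻¹ • A ^ p.1‖ * ‖X‖ * ‖(p.2 ! : ℝ)⁻¹ • A ^ p.2‖ := by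
    rw [Set.uIoc_of_le zero_le_one] at ht
    refine norm_mul₃_le.trans ?_
    gcongr
    · exact norm_inv_factorial_smul_smul_pow_le A
        (abs_le.mpr ⟨by linarith [ht.2], by linarith [ht.1]⟩) _
    · exact norm_inv_factorial_smul_smul_pow_le A (abs_le.mpr ⟨by linarith [ht.1], ht.2⟩) _
  have hbound := ((norm_expSeries_summable' (𝕂 := ℝ) A).mul_right ‖X‖).mul_of_nonneg
    (norm_expSeries_summable' (𝕂 := ℝ) A) (fun _ => by positivity) (fun _ => norm_nonneg _)
  have h := hasSum_integral_of_dominated_convergence (μ := volume) (a := 0) (b := 1)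
    (F := fun (p : ℕ × ℕ) (t : ℝ) =>
      ((p.1 ! : ℝ)⁻¹ • ((1 - t) • A) ^ p.1) * X * ((p.2 ! : ℝ)⁻¹ • (t • A) ^ p.2))
    (fun p _ => ‖(p.1 ! : ℝ)⁻¹ • A ^ p.1‖ * ‖X‖ * ‖(p.2 ! : ℝ)⁻¹ • A ^ p.2‖)
    (fun p => (by fun_prop : Continuous _).aestronglyMeasurable)
    (fun p => Eventually.of_forall fun _ => hle p) (Eventually.of_forall fun _ _ => hbound)
    intervalIntegrable_const
    (Eventually.of_forall fun t _ => hasSum_exp_mul_exp A X (1 - t) t)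
  simpa only [integral_inv_factorial_smul_pow_mul_inv_factorial_smul_pow] using h

theorem hasSum_integral_exp_mul_exp (A X : 𝔸) :
    HasSum (fun m => (m ! : ℝ)⁻¹ • ∑ j ∈ range m, A ^ j * X * A ^ (m - 1 - j))
      (∫ t in (0:ℝ)..1, exp ((1 - t) • A) * X * exp (t • A)) := by
  refine (hasSum_nat_add_iff' (f := fun m => (m ! : ℝ)⁻¹ • ∑ j ∈ range m,
    A ^ j * X * A ^ (m - 1 - j)) 1).mp ?_
  simp only [range_one, sum_singleton, range_zero, sum_empty, smul_zero, sub_zero,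
    add_tsub_cancel_right]
  refine (hasSum_prod_integral_exp_mul_exp A X).sum_antidiagonal.congr_fun fun n => ?_
  rw [Nat.sum_antidiagonal_eq_sum_range_succ_mk, smul_sum]
  refine sum_congr rfl fun j hj => ?_
  rw [Nat.add_sub_of_le (Nat.lt_succ_iff.mp (mem_range.mp hj))]

end BanachAlgebra

section ClosedOperator

variable {𝕜 E : Type*} [RCLike 𝕜] [NormedAddCommGroup E] [NormedSpace 𝕜 E]
  {B : E →ₗ.[𝕜] E} {A X : E →L[𝕜] E} (hdom : ∀ x ∈ B.domain, A x ∈ B.domain)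
include hdom

theorem LinearPMap.pow_apply_mem_domain (m : ℕ) {x : E} (hx : x ∈ B.domain) :
    (A ^ m) x ∈ B.domain := by
  induction m with
  | zero => exact hx
  | succ m ih => rw [pow_succ']; exact hdom _ ih

variable (hcomm : ∀ x : B.domain, B ⟨A x, hdom x x.2⟩ = A (B x) + X x)
include hcomm

theorem LinearPMap.apply_pow_apply (m : ℕ) (x : B.domain) :
    B ⟨(A ^ m) x, B.pow_apply_mem_domain hdom m x.2⟩
      = (A ^ m) (B x) + (∑ j ∈ range m, A ^ j * X * A ^ (m - 1 - j)) x := by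
  induction m with
  | zero => simp
  | succ m ih =>
    have hsum : ∑ j ∈ range (m + 1), A ^ j * X * A ^ (m + 1 - 1 - j)
        = A * ∑ j ∈ range m, A ^ j * X * A ^ (m - 1 - j) + X * A ^ m := by
      rw [sum_range_succ', mul_sum, add_tsub_cancel_right]
      congr 1
      refine sum_congr rfl fun j _ => ?_
      rw [pow_succ', Nat.sub_succ', Nat.sub_right_comm]
      simp only [mul_assoc]
    have hpow : (⟨(A ^ (m + 1)) x, B.pow_apply_mem_domain hdom (m + 1) x.2⟩ : B.domain)
        = ⟨A ((A ^ m) x), hdom _ (B.pow_apply_mem_domain hdom m x.2)⟩ := by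
      rw [Subtype.mk.injEq, pow_succ', mul_apply_eq_comp]
    rw [hpow, hcomm ⟨(A ^ m) x, B.pow_apply_mem_domain hdom m x.2⟩, ih, hsum]
    simp only [ContinuousLinearMap.map_add, _root_.add_apply, mul_apply_eq_comp, pow_succ']
    abel

theorem LinearPMap.IsClosed.exists_commutator_exp_eq [CompleteSpace E] (hB : B.IsClosed)
    {D : E →L[𝕜] E}
    (hD : HasSum (fun m => (m ! : 𝕜)⁻¹ • ∑ j ∈ range m, A ^ j * X * A ^ (m - 1 - j)) D) :
    ∃ hexp : ∀ x ∈ B.domain, exp A x ∈ B.domain,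
      ∀ x : B.domain, B ⟨exp A x, hexp x x.2⟩ - exp A (B x) = D x := by
  have hseries (y : E) : HasSum (fun m => (m ! : 𝕜)⁻¹ • (A ^ m) y) (exp A y) := by
    simpa using (exp_series_hasSum_exp' (𝕂 := 𝕜) A).mapL (ContinuousLinearMap.apply 𝕜 E y)
  have key (x : B.domain) : ∃ h : exp A x ∈ B.domain, B ⟨exp A x, h⟩ = exp A (B x) + D x := by
    let f : ℕ → B.domain := fun m => (m ! : 𝕜)⁻¹ • ⟨(A ^ m) x, B.pow_apply_mem_domain hdom m x.2⟩
    have hf : HasSum (fun m => (f m : E)) (exp A x) := by simpa [f] using hseries x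
    have hBf : HasSum (fun m => B (f m)) (exp A (B x) + D x) := by
      refine ((hseries (B x)).add (hD.mapL (ContinuousLinearMap.apply 𝕜 E (x : E)))).congr_fun
        fun m => ?_
      rw [B.map_smul, B.apply_pow_apply hdom hcomm, smul_add]
      rfl
    exact hB.exists_apply_eq_of_hasSum hf hBf
  refine ⟨fun x hx => (key ⟨x, hx⟩).1, fun x => ?_⟩
  obtain ⟨_, h⟩ := key x
  exact sub_eq_iff_eq_add'.mpr h

end ClosedOperator

theorem stmt3_general {H : Type*} [NormedAddCommGroup H] [InnerProductSpace ℂ H]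
    [CompleteSpace H]
    (B : H →ₗ.[ℂ] H) (hB : IsSelfAdjoint B)
    (C K : H →L[ℂ] H)
    (hdomC : ∀ x, x ∈ B.domain → C x ∈ B.domain)
    (hK : ∀ x : B.domain, K x = B ⟨C x, hdomC x x.2⟩ - C (B x)) :
    ∃ hdomE : ∀ x, x ∈ B.domain → NormedSpace.exp (Complex.I • C) x ∈ B.domain,
      ∀ x : B.domain,
        B ⟨NormedSpace.exp (Complex.I • C) x, hdomE x x.2⟩
            - NormedSpace.exp (Complex.I • C) (B x)
          = (Complex.I • ∫ t in (0:ℝ)..1,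
              (NormedSpace.exp ((1 - (t : ℂ)) • (Complex.I • C))).comp
                (K.comp (NormedSpace.exp ((t : ℂ) • (Complex.I • C))))) x := by
  have hdom (x) (hx : x ∈ B.domain) : (Complex.I • C) x ∈ B.domain :=
    B.domain.smul_mem _ (hdomC x hx)
  have hcomm (x : B.domain) :
      B ⟨(Complex.I • C) x, hdom x x.2⟩ = (Complex.I • C) (B x) + (Complex.I • K) x := by
    have hx : (⟨(Complex.I • C) x, hdom x x.2⟩ : B.domain) = Complex.I • ⟨C x, hdomC x x.2⟩ :=
      rfl
    rw [hx, B.map_smul, smul_apply, smul_apply, hK x, ← smul_add, add_sub_cancel]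
  have hintegral :
      ∫ t in (0:ℝ)..1, exp ((1 - t) • (Complex.I • C)) * (Complex.I • K) * exp (t • (Complex.I • C))
        = Complex.I • ∫ t in (0:ℝ)..1, (exp ((1 - (t : ℂ)) • (Complex.I • C))).comp
            (K.comp (exp ((t : ℂ) • (Complex.I • C)))) := by
    rw [← intervalIntegral.integral_smul]
    refine integral_congr fun t _ => ?_
    have hreal : (1 - (t : ℂ)) • (Complex.I • C) = (1 - t) • (Complex.I • C) := by
      rw [← Complex.coe_smul]; push_cast; rfl
    rw [hreal, Complex.coe_smul, ← ContinuousLinearMap.mul_def, ← ContinuousLinearMap.mul_def,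
      mul_smul_comm, smul_mul_assoc, mul_assoc]
  have hD := hasSum_integral_exp_mul_exp (Complex.I • C) (Complex.I • K)
  rw [hintegral] at hD
  exact hB.isClosed.exists_commutator_exp_eq hdom hcomm
    (hD.congr_fun fun m => inv_natCast_smul_eq ℂ ℝ _ _)

/-- **Duhamel-type formula.** Let `B` be a densely-defined self-adjoint operator on a
complex separable Hilbert space `H`, and let `C` be a bounded operator such that the
commutator `[B, C]` (defined on `dom B`) has a bounded extension `K`.  Then `[B, e^{iC}]`
has a bounded extension, given by `i ∫₀¹ e^{i(1-t)C} [B,C] e^{itC} dt`; that is,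
`e^{iC}` maps `dom B` into itself and on `dom B` one has
`B e^{iC} x - e^{iC} B x = (i ∫₀¹ e^{i(1-t)C} K e^{itC} dt) x`. -/
theorem stmt3 {H : Type*} [NormedAddCommGroup H] [InnerProductSpace ℂ H]
    [CompleteSpace H] [TopologicalSpace.SeparableSpace H]
    (B : H →ₗ.[ℂ] H) (hB : IsSelfAdjoint B)
    (C K : H →L[ℂ] H)
    (hdomC : ∀ x, x ∈ B.domain → C x ∈ B.domain)
    (hK : ∀ x : B.domain, K x = B ⟨C x, hdomC x x.2⟩ - C (B x)) :
    ∃ hdomE : ∀ x, x ∈ B.domain → NormedSpace.exp (Complex.I • C) x ∈ B.domain,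
      ∀ x : B.domain,
        B ⟨NormedSpace.exp (Complex.I • C) x, hdomE x x.2⟩
            - NormedSpace.exp (Complex.I • C) (B x)
          = (Complex.I • ∫ t in (0:ℝ)..1,
              (NormedSpace.exp ((1 - (t : ℂ)) • (Complex.I • C))).comp
                (K.comp (NormedSpace.exp ((t : ℂ) • (Complex.I • C))))) x :=
  stmt3_general B hB C K hdomC hK
end

section
/- Let p > 0, let T be a compact operator on a Hilbert space with lim_{t→∞} t^{1/p} μ(t, T) = a existing, and let V be a compact operator with lim_{t→∞} t^{1/p} μ(t, V) = 0. Then lim_{t→∞} t^{1/p} μ(t, T+V) = a. -/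
/-!
Fan's inequality `μ(m + n, A + B) ≤ μ(m, A) + μ(n, B)` bounds `μ(t, T + V)`
above by `μ(ct, T) + μ((1 - c)t, V)` for `0 < c < 1`, and below by `μ(ct, T) - μ((c - 1)t, V)`
for `c > 1`.
After multiplication by `t^{1/p}` these bounds tend to `c^{-1/p} a`, because the `V`-terms
are `o(t^{-1/p})` and the scaling `t ↦ ct` only rescales the limit; letting `c → 1` gives `a`.
-/

open MeasureTheory Filter Topology

/-- The `n`-th singular value (approximation number) of a bounded operator:
`μ(n,T) = inf{‖T - F‖ : rank F ≤ n}`. -/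
noncomputable def approxNum {H : Type*} [NormedAddCommGroup H] [NormedSpace ℂ H]
    (T : H →L[ℂ] H) (n : ℕ) : ℝ :=
  sInf ((fun F : H →L[ℂ] H => ‖T - F‖) ''
    {F | Module.rank ℂ (LinearMap.range (F : H →ₗ[ℂ] H)) ≤ n})

/-- The singular value function `μ(t,T) = μ(⌊t⌋,T)` of a real variable `t`. -/
noncomputable def svf {H : Type*} [NormedAddCommGroup H] [NormedSpace ℂ H]
    (T : H →L[ℂ] H) (t : ℝ) : ℝ :=
  approxNum T ⌊t⌋₊

section ApproxNum

variable {H : Type*} [NormedAddCommGroup H] [NormedSpace ℂ H]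

lemma approxNum_le {T F : H →L[ℂ] H} {n : ℕ}
    (hF : LinearMap.rank (F : H →ₗ[ℂ] H) ≤ n) :
    approxNum T n ≤ ‖T - F‖ :=
  csInf_le ⟨0, by rintro _ ⟨G, -, rfl⟩; exact norm_nonneg _⟩ ⟨F, hF, rfl⟩

lemma le_approxNum {T : H →L[ℂ] H} {n : ℕ} {x : ℝ}
    (h : ∀ F : H →L[ℂ] H, LinearMap.rank (F : H →ₗ[ℂ] H) ≤ n → x ≤ ‖T - F‖) :
    x ≤ approxNum T n :=
  le_csInf ⟨‖T - 0‖, 0, by simp, rfl⟩ (by rintro _ ⟨F, hF, rfl⟩; exact h F hF)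

lemma approxNum_antitone (T : H →L[ℂ] H) : Antitone (approxNum T) := fun _ _ hmn =>
  le_approxNum fun _ hF => approxNum_le (hF.trans (by exact_mod_cast hmn))

lemma approxNum_add_le (A B : H →L[ℂ] H) (m n : ℕ) :
    approxNum (A + B) (m + n) ≤ approxNum A m + approxNum B n := by
  have hsum : ∀ F G : H →L[ℂ] H, LinearMap.rank (F : H →ₗ[ℂ] H) ≤ m →
      LinearMap.rank (G : H →ₗ[ℂ] H) ≤ n →
      approxNum (A + B) (m + n) ≤ ‖A - F‖ + ‖B - G‖ := by
    intro F G hF hG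
    have hrank : LinearMap.rank ((F + G : H →L[ℂ] H) : H →ₗ[ℂ] H) ≤ (m + n : ℕ) := by
      push_cast
      exact (LinearMap.rank_add_le _ _).trans (add_le_add hF hG)
    calc approxNum (A + B) (m + n) ≤ ‖(A + B) - (F + G)‖ := approxNum_le hrank
      _ = ‖(A - F) + (B - G)‖ := by rw [add_sub_add_comm]
      _ ≤ ‖A - F‖ + ‖B - G‖ := norm_add_le _ _
  have hB : ∀ G : H →L[ℂ] H, LinearMap.rank (G : H →ₗ[ℂ] H) ≤ n →
      approxNum (A + B) (m + n) - ‖B - G‖ ≤ approxNum A m := fun G hG =>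
    le_approxNum fun F hF => by linarith [hsum F G hF hG]
  have : approxNum (A + B) (m + n) - approxNum A m ≤ approxNum B n :=
    le_approxNum fun G hG => by linarith [hB G hG]
  linarith

lemma approxNum_neg_le (V : H →L[ℂ] H) (n : ℕ) : approxNum (-V) n ≤ approxNum V n :=
  le_approxNum fun F hF =>
    calc approxNum (-V) n ≤ ‖-V - -F‖ := approxNum_le <| by
          rwa [ContinuousLinearMap.toLinearMap_neg, LinearMap.rank, LinearMap.range_neg]
      _ = ‖V - F‖ := by rw [← norm_neg, neg_sub, sub_neg_eq_add, neg_add_eq_sub]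

lemma approxNum_neg (V : H →L[ℂ] H) (n : ℕ) : approxNum (-V) n = approxNum V n :=
  le_antisymm (approxNum_neg_le V n) (by simpa using approxNum_neg_le (-V) n)

lemma svf_add_le (A B : H →L[ℂ] H) {s u : ℝ} (hs : 0 ≤ s) (hu : 0 ≤ u) :
    svf (A + B) (s + u) ≤ svf A s + svf B u := by
  have hfloor : ⌊s⌋₊ + ⌊u⌋₊ ≤ ⌊s + u⌋₊ := Nat.le_floor <| by
    push_cast
    exact add_le_add (Nat.floor_le hs) (Nat.floor_le hu)
  exact (approxNum_antitone _ hfloor).trans (approxNum_add_le A B _ _)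

lemma svf_neg (V : H →L[ℂ] H) (t : ℝ) : svf (-V) t = svf V t :=
  approxNum_neg V _

lemma svf_add_le_split (T V : H →L[ℂ] H) {c t : ℝ} (hc₀ : 0 ≤ c) (hc₁ : c ≤ 1)
    (ht : 0 ≤ t) :
    svf (T + V) t ≤ svf T (c * t) + svf V ((1 - c) * t) :=
  calc svf (T + V) t = svf (T + V) (c * t + (1 - c) * t) := by ring_nf
    _ ≤ svf T (c * t) + svf V ((1 - c) * t) :=
      svf_add_le T V (mul_nonneg hc₀ ht) (mul_nonneg (sub_nonneg.2 hc₁) ht)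

lemma svf_mul_le_add (T V : H →L[ℂ] H) {c t : ℝ} (hc : 1 ≤ c) (ht : 0 ≤ t) :
    svf T (c * t) ≤ svf (T + V) t + svf V ((c - 1) * t) :=
  calc svf T (c * t) = svf ((T + V) + -V) (t + (c - 1) * t) := by
        rw [add_neg_cancel_right]; ring_nf
    _ ≤ svf (T + V) t + svf V ((c - 1) * t) := by
      rw [← svf_neg V]
      exact svf_add_le _ _ ht (mul_nonneg (sub_nonneg.2 hc) ht)

end ApproxNum

theorem tendsto_of_eventually_squeeze_family {α β γ : Type*} [TopologicalSpace α]
    [LinearOrder α] [OrderTopology α] {l : Filter β} {F G : Filter γ} [F.NeBot] [G.NeBot]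
    {g : β → α} {u v : γ → β → α} {φ : γ → α} {a : α}
    (hφF : Tendsto φ F (𝓝 a)) (hφG : Tendsto φ G (𝓝 a))
    (hu : ∀ᶠ c in F, Tendsto (u c) l (𝓝 (φ c)) ∧ g ≤ᶠ[l] u c)
    (hv : ∀ᶠ c in G, Tendsto (v c) l (𝓝 (φ c)) ∧ v c ≤ᶠ[l] g) :
    Tendsto g l (𝓝 a) := by
  refine tendsto_order.2 ⟨fun b hb => ?_, fun b hb => ?_⟩
  · obtain ⟨c, ⟨hvc, hvg⟩, hc⟩ := (hv.and (hφG.eventually (lt_mem_nhds hb))).exists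
    filter_upwards [hvc.eventually (lt_mem_nhds hc), hvg] with t h1 h2
    exact h1.trans_le h2
  · obtain ⟨c, ⟨huc, hug⟩, hc⟩ := (hu.and (hφF.eventually (gt_mem_nhds hb))).exists
    filter_upwards [huc.eventually (gt_mem_nhds hc), hug] with t h1 h2
    exact h2.trans_lt h1

theorem tendsto_rpow_mul_comp_const_mul {f : ℝ → ℝ} {r L c : ℝ} (hc : 0 < c)
    (hf : Tendsto (fun t => t ^ r * f t) atTop (𝓝 L)) :
    Tendsto (fun t => t ^ r * f (c * t)) atTop (𝓝 ((c ^ r)⁻¹ * L)) := by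
  refine ((hf.comp (tendsto_id.const_mul_atTop hc)).const_mul (c ^ r)⁻¹).congr' ?_
  filter_upwards [eventually_ge_atTop 0] with t ht
  rw [Function.comp_apply, id_eq, Real.mul_rpow hc.le ht, mul_assoc,
    inv_mul_cancel_left₀ (Real.rpow_pos_of_pos hc r).ne']

theorem stmt13_general {H : Type*} [NormedAddCommGroup H] [InnerProductSpace ℂ H]
    (p a : ℝ) (T V : H →L[ℂ] H)
    (hTlim : Tendsto (fun t : ℝ => t ^ (1 / p) * svf T t) atTop (𝓝 a))
    (hVlim : Tendsto (fun t : ℝ => t ^ (1 / p) * svf V t) atTop (𝓝 0)) :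
    Tendsto (fun t : ℝ => t ^ (1 / p) * svf (T + V) t) atTop (𝓝 a) := by
  have hφ : Tendsto (fun c : ℝ => (c ^ (1 / p))⁻¹ * a) (𝓝 1) (𝓝 a) := by
    simpa using (((Real.continuousAt_rpow_const 1 (1 / p) (Or.inl one_ne_zero)).inv₀
      (by simp)).mul_const a).tendsto
  refine tendsto_of_eventually_squeeze_family (F := 𝓝[<] 1) (G := 𝓝[>] 1)
    (u := fun c t => t ^ (1 / p) * svf T (c * t) + t ^ (1 / p) * svf V ((1 - c) * t))
    (v := fun c t => t ^ (1 / p) * svf T (c * t) - t ^ (1 / p) * svf V ((c - 1) * t))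
    (hφ.mono_left nhdsWithin_le_nhds) (hφ.mono_left nhdsWithin_le_nhds) ?_ ?_
  · filter_upwards [Ioo_mem_nhdsLT zero_lt_one] with c ⟨hc₀, hc₁⟩
    have hlim := (tendsto_rpow_mul_comp_const_mul hc₀ hTlim).add
      (tendsto_rpow_mul_comp_const_mul (sub_pos.2 hc₁) hVlim)
    refine ⟨by simpa using hlim, ?_⟩
    filter_upwards [eventually_ge_atTop 0] with t ht
    rw [← mul_add]
    exact mul_le_mul_of_nonneg_left (svf_add_le_split T V hc₀.le hc₁.le ht)
      (Real.rpow_nonneg ht _)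
  · filter_upwards [self_mem_nhdsWithin] with c (hc₁ : 1 < c)
    have hlim := (tendsto_rpow_mul_comp_const_mul (zero_lt_one.trans hc₁) hTlim).sub
      (tendsto_rpow_mul_comp_const_mul (sub_pos.2 hc₁) hVlim)
    refine ⟨by simpa using hlim, ?_⟩
    filter_upwards [eventually_ge_atTop 0] with t ht
    rw [← mul_sub]
    exact mul_le_mul_of_nonneg_left (sub_le_iff_le_add.2 (svf_mul_le_add T V hc₁.le ht))
      (Real.rpow_nonneg ht _)

/-- **Ky Fan's lemma.** Let `p > 0`, let `T` be a compact operator with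
`lim_{t→∞} t^{1/p} μ(t,T) = a`, and let `V` be compact with
`lim_{t→∞} t^{1/p} μ(t,V) = 0`.  Then `lim_{t→∞} t^{1/p} μ(t,T+V) = a`. -/
theorem stmt13 {H : Type*} [NormedAddCommGroup H] [InnerProductSpace ℂ H]
    [CompleteSpace H]
    (p a : ℝ) (hp : 0 < p) (T V : H →L[ℂ] H)
    (hT : IsCompactOperator T) (hV : IsCompactOperator V)
    (hTlim : Tendsto (fun t : ℝ => t ^ (1 / p) * svf T t) atTop (𝓝 a))
    (hVlim : Tendsto (fun t : ℝ => t ^ (1 / p) * svf V t) atTop (𝓝 0)) :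
    Tendsto (fun t : ℝ => t ^ (1 / p) * svf (T + V) t) atTop (𝓝 a) :=
  stmt13_general p a T V hTlim hVlim
end
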